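/- arXiv:1711.01688 — 2 statements merged into one kernel-verified Lean document; each statement's English description precedes it below -/
import Mathlib

section
/- Let p be a prime and G a finite p-group. Then G is autonilpotent if and only if Aut G is a p-group. -/
/-- The autocommutator `[x, α] = x⁻¹ · α(x)`. -/
def autoComm {G : Type*} [Group G] (x : G) (α : MulAut G) : G := x⁻¹ * α x

/-- `autoL G n = Lₙ(G)`: elements `x` with `[x, α₁, …, αₙ] = 1` for all `α₁, …, αₙ ∈ Aut G`. -/
def autoL (G : Type*) [Group G] (n : ℕ) : Set G :=
  {x | ∀ l : List (MulAut G), l.length = n → l.foldl autoComm x = 1}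

/-- A group is autonilpotent if `G = Lₙ(G)` for some `n`. -/
def Autonilpotent (G : Type*) [Group G] : Prop := ∃ n : ℕ, ∀ x : G, x ∈ autoL G n

/-!
If `Aut G` is a `p`-group, then so is `G ⋊ Aut G`, which is therefore nilpotent; since
`[x, α]` is the group commutator `⁅x⁻¹, α⁆` in `G ⋊ Aut G`, an `n`-fold autocommutator lies in
the `n`-th term of its lower central series.

Conversely, let `α` have order prime to `p`. If `z = [y, α]` is fixed by `α`, then
`αᵏ(y) = y zᵏ`, so the order of `z` divides both a power of `p` and that of `α`; hence `z = 1`.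
Thus `[y, α, α] = 1` forces `[y, α] = 1`, and descending along `[x, α, …, α] = 1` gives
`α = 1`. Applied to the `p'`-part of an arbitrary automorphism, this shows that `Aut G` is a
`p`-group.
-/

open scoped commutatorElement

section AutoComm

variable {G : Type*} [Group G]

theorem autoComm_eq_one_iff {x : G} {α : MulAut G} : autoComm x α = 1 ↔ α x = x := by
  rw [autoComm, inv_mul_eq_one, eq_comm]

theorem foldl_replicate_autoComm (α : MulAut G) (n : ℕ) (x : G) :
    (List.replicate n α).foldl autoComm x = (autoComm · α)^[n] x := by
  induction n generalizing x with
  | zero => rfl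
  | succ n ih => rw [List.replicate_succ, List.foldl_cons, ih, Function.iterate_succ_apply]

theorem mulAut_pow_apply_of_map_autoComm {α : MulAut G} {y : G}
    (h : α (autoComm y α) = autoComm y α) (k : ℕ) : (α ^ k) y = y * autoComm y α ^ k := by
  induction k with
  | zero => simp
  | succ k ih =>
    rw [pow_succ', MulAut.mul_apply, ih, map_mul, map_pow, h, pow_succ', ← mul_assoc,
      autoComm, mul_inv_cancel_left]

theorem autoComm_eq_one_of_autoComm_autoComm_eq_one {p q : ℕ} (hG : IsPGroup p G)
    (hq : p.Coprime q) {α : MulAut G} (hα : α ^ q = 1) {y : G}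
    (h : autoComm (autoComm y α) α = 1) : autoComm y α = 1 := by
  have hpow : autoComm y α ^ q = 1 := by
    simpa [hα] using (mulAut_pow_apply_of_map_autoComm (autoComm_eq_one_iff.mp h) q).symm
  exact orderOf_eq_one_iff.mp
    ((hG.orderOf_coprime hq _).eq_one_of_dvd (orderOf_dvd_of_pow_eq_one hpow))

theorem eq_one_of_iterate_autoComm_eq_one {p q : ℕ} (hG : IsPGroup p G) (hq : p.Coprime q)
    {α : MulAut G} (hα : α ^ q = 1) {n : ℕ} (h : ∀ x, (autoComm · α)^[n] x = 1) : α = 1 := by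
  have descend : ∀ m, (∀ x, (autoComm · α)^[m + 1] x = 1) → ∀ x, autoComm x α = 1 := by
    intro m
    induction m with
    | zero => exact id
    | succ m ih =>
      refine fun hm => ih fun x => ?_
      rw [Function.iterate_succ_apply']
      refine autoComm_eq_one_of_autoComm_autoComm_eq_one hG hq hα ?_
      simpa only [Function.iterate_succ_apply'] using hm x
  have hsucc : ∀ x, (autoComm · α)^[n + 1] x = 1 := fun x => by
    rw [Function.iterate_succ_apply]
    exact h _
  exact MulEquiv.ext fun x => autoComm_eq_one_iff.mp (descend n hsucc x)

theorem Autonilpotent.eq_one_of_pow_eq_one {p q : ℕ} (hA : Autonilpotent G)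
    (hG : IsPGroup p G) (hq : p.Coprime q) {α : MulAut G} (hα : α ^ q = 1) : α = 1 := by
  obtain ⟨n, hn⟩ := hA
  refine eq_one_of_iterate_autoComm_eq_one hG hq hα (n := n) fun x => ?_
  rw [← foldl_replicate_autoComm]
  exact hn x _ List.length_replicate

theorem Autonilpotent.isPGroup_mulAut [Finite G] {p : ℕ} (hp : p.Prime) (hA : Autonilpotent G)
    (hG : IsPGroup p G) : IsPGroup p (MulAut G) := by
  intro α
  have hα : orderOf α ≠ 0 := (orderOf_pos α).ne'
  refine ⟨(orderOf α).factorization p, hA.eq_one_of_pow_eq_one hG (Nat.coprime_ordCompl hp hα) ?_⟩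
  rw [← pow_mul, Nat.ordProj_mul_ordCompl_eq_self, pow_orderOf_eq_one]

end AutoComm

section Holomorph

open SemidirectProduct

abbrev Holomorph (G : Type*) [Group G] : Type _ := G ⋊[MonoidHom.id (MulAut G)] MulAut G

variable {G : Type*} [Group G]

theorem inl_autoComm (x : G) (α : MulAut G) :
    (inl (autoComm x α) : Holomorph G) = ⁅(inl x : Holomorph G)⁻¹, inr α⁆ := by
  rw [commutatorElement_def, inv_inv, autoComm, map_mul,
    show α x = MonoidHom.id _ α x from rfl, inl_aut]
  simp only [map_inv, mul_assoc]

theorem inl_foldl_autoComm_mem_lowerCentralSeries (l : List (MulAut G)) {k : ℕ} {x : G}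
    (hx : inl x ∈ (⊤ : Subgroup (Holomorph G)).lowerCentralSeries k) :
    inl (l.foldl autoComm x) ∈
      (⊤ : Subgroup (Holomorph G)).lowerCentralSeries (k + l.length) := by
  induction l generalizing k x with
  | nil => simpa using hx
  | cons α l ih =>
    rw [List.foldl_cons, List.length_cons, ← add_assoc, add_right_comm]
    refine ih ?_
    rw [inl_autoComm, Subgroup.lowerCentralSeries_succ]
    exact Subgroup.commutator_mem_commutator (inv_mem hx) (Subgroup.mem_top _)

theorem autonilpotent_of_isNilpotent_holomorph [Group.IsNilpotent (Holomorph G)] :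
    Autonilpotent G := by
  obtain ⟨c, hc⟩ := Subgroup.nilpotent_iff_lowerCentralSeries.mp
    ‹Group.IsNilpotent (Holomorph G)›
  refine ⟨c, fun x l hl => inl_injective (φ := MonoidHom.id (MulAut G)) ?_⟩
  have := inl_foldl_autoComm_mem_lowerCentralSeries l (k := 0) (x := x) (by simp)
  rwa [zero_add, hl, hc, Subgroup.mem_bot, ← map_one inl] at this

instance [Finite G] : Finite (Holomorph G) :=
  Nat.finite_of_card_ne_zero <| by
    rw [SemidirectProduct.card]
    exact (Nat.mul_pos Nat.card_pos Nat.card_pos).ne'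

theorem IsPGroup.holomorph [Finite G] {p : ℕ} [Fact p.Prime] (hG : IsPGroup p G)
    (hAut : IsPGroup p (MulAut G)) : IsPGroup p (Holomorph G) := by
  obtain ⟨a, ha⟩ := IsPGroup.iff_card.mp hG
  obtain ⟨b, hb⟩ := IsPGroup.iff_card.mp hAut
  exact IsPGroup.iff_card.mpr ⟨a + b, by rw [SemidirectProduct.card, ha, hb, pow_add]⟩

end Holomorph

/-- A finite `p`-group `G` is autonilpotent iff `Aut G` is a `p`-group. -/
theorem pGroup_autonilpotent_iff_aut_pGroup (p : ℕ) (hp : p.Prime) (G : Type*) [Group G]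
    [Finite G] (hG : IsPGroup p G) :
    Autonilpotent G ↔ IsPGroup p (MulAut G) := by
  have : Fact p.Prime := ⟨hp⟩
  refine ⟨fun hA => hA.isPGroup_mulAut hp hG, fun hAut => ?_⟩
  have := (hG.holomorph hAut).isNilpotent
  exact autonilpotent_of_isNilpotent_holomorph
end

section
/- Let R be a group of operators for a finite group G (R acts on G by automorphisms via φ : R → Aut G) such that conjugating any automorphism in the image φ(R) by any inner automorphism of G again yields an automorphism in φ(R) (i.e., Inn G ≤ N_{Aut G}(Aut_R G)). Then Lₙ(G, R) = G for some natural number n if and only if Kₙ(G, R) = 1 for some natural number n. -/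
/-- The commutator `[x, r] = x⁻¹ · x^r` for an operator group acting via `φ : R →* Aut G`. -/
def opComm {R G : Type*} [Group R] [Group G] (φ : R →* MulAut G) (x : G) (r : R) : G :=
  x⁻¹ * φ r x

/-- `opL φ n = Lₙ(G, R)`: elements `x` with `[x, r₁, …, rₙ] = 1` for all `r₁, …, rₙ ∈ R`. -/
def opL {R G : Type*} [Group R] [Group G] (φ : R →* MulAut G) (n : ℕ) : Set G :=
  {x | ∀ l : List R, l.length = n → l.foldl (opComm φ) x = 1}

/-- `opK φ n = Kₙ(G, R)`: `K₀ = G`, `Kₙ₊₁ = [Kₙ, R]` is generated by the `[x, r]`,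
`x ∈ Kₙ(G, R)`, `r ∈ R`. -/
def opK {R G : Type*} [Group R] [Group G] (φ : R →* MulAut G) : ℕ → Subgroup G
  | 0 => ⊤
  | n + 1 => Subgroup.closure {y | ∃ x ∈ opK φ n, ∃ r : R, y = x⁻¹ * φ r x}

section Aux

variable {R G : Type*} [Group R] [Group G] (φ : R →* MulAut G)

lemma mem_opL_zero (x : G) : x ∈ opL φ 0 ↔ x = 1 := by
  constructor
  · intro h; simpa using h [] rfl
  · rintro rfl l hl
    rw [List.length_eq_zero_iff] at hl
    subst hl; rfl

lemma mem_opL_succ (n : ℕ) (x : G) :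
    x ∈ opL φ (n + 1) ↔ ∀ r : R, opComm φ x r ∈ opL φ n := by
  constructor
  · intro h r l hl
    exact h (r :: l) (by simp [hl])
  · intro h l hl
    cases l with
    | nil => simp at hl
    | cons r l' =>
      rw [List.foldl_cons]
      exact h r l' (by simpa using hl)

lemma opComm_one (r : R) : opComm φ (1 : G) r = 1 := by
  simp [opComm]

lemma foldl_opComm_one (l : List R) : l.foldl (opComm φ) (1 : G) = 1 := by
  induction l with
  | nil => rfl
  | cons r l ih => rw [List.foldl_cons, opComm_one, ih]

lemma one_mem_opL (n : ℕ) : (1 : G) ∈ opL φ n :=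
  fun l _ => foldl_opComm_one φ l

lemma opL_closed
    (hInn : ∀ (g : G) (r : R), MulAut.conj g * φ r * (MulAut.conj g)⁻¹ ∈ φ.range) :
    ∀ n : ℕ,
      (∀ x ∈ opL φ n, ∀ y ∈ opL φ n, x * y ∈ opL φ n) ∧
      (∀ x ∈ opL φ n, x⁻¹ ∈ opL φ n) ∧
      (∀ x ∈ opL φ n, ∀ g : G, g⁻¹ * x * g ∈ opL φ n) ∧
      (∀ x ∈ opL φ n, ∀ s : R, φ s x ∈ opL φ n) := by
  intro n
  induction n with
  | zero =>
    simp only [mem_opL_zero]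
    refine ⟨?_, ?_, ?_, ?_⟩
    · rintro x rfl y rfl; simp
    · rintro x rfl; simp
    · rintro x rfl g; simp
    · rintro x rfl s; simp
  | succ n ih =>
    obtain ⟨hmul, hinv, hconj, haut⟩ := ih
    refine ⟨?_, ?_, ?_, ?_⟩
    · intro x hx y hy
      rw [mem_opL_succ] at hx hy ⊢
      intro r
      have hco : opComm φ (x * y) r = (y⁻¹ * opComm φ x r * y) * opComm φ y r := by
        simp only [opComm, map_mul]
        group
      rw [hco]
      exact hmul _ (hconj _ (hx r) y) _ (hy r)
    · intro x hx
      rw [mem_opL_succ] at hx ⊢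
      intro r
      have hco : opComm φ x⁻¹ r = x * (opComm φ x r)⁻¹ * x⁻¹ := by
        simp only [opComm, map_inv]
        group
      rw [hco]
      have := hconj _ (hinv _ (hx r)) x⁻¹
      simpa [mul_assoc] using this
    · intro x hx g
      rw [mem_opL_succ] at hx ⊢
      intro r
      obtain ⟨s, hs⟩ := hInn g r
      have hsx : φ s x = g * φ r (g⁻¹ * x * g) * g⁻¹ := by
        have h0 := congrArg (fun f : MulAut G => f x) hs
        simp only [MulAut.mul_apply, MulAut.conj_apply, MulAut.conj_inv_apply] at h0
        rw [h0]
      have hco : opComm φ (g⁻¹ * x * g) r = g⁻¹ * opComm φ x s * g := by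
        simp only [opComm, hsx]
        group
      rw [hco]
      exact hconj _ (hx s) g
    · intro x hx s
      rw [mem_opL_succ] at hx ⊢
      intro r
      have hco : opComm φ (φ s x) r = φ s (opComm φ x (s⁻¹ * r * s)) := by
        unfold opComm
        rw [map_mul, map_inv]
        congr 1
        have h2 : s * (s⁻¹ * r * s) = r * s := by group
        rw [← MulAut.mul_apply, ← MulAut.mul_apply, ← map_mul, ← map_mul, h2]
      rw [hco]
      exact haut _ (hx _) s

end Aux

/-- If `R` is a group of operators for a finite group `G` (acting via `φ : R →* Aut G`) with
`Inn G ≤ N_{Aut G}(Aut_R G)`, then `Lₙ(G, R) = G` for some `n` iff `Kₙ(G, R) = 1` for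
some `n`. -/
theorem opL_eq_top_iff_opK_eq_bot (R G : Type*) [Group R] [Group G] [Finite R] [Finite G]
    (φ : R →* MulAut G)
    (hInn : ∀ (g : G) (r : R), MulAut.conj g * φ r * (MulAut.conj g)⁻¹ ∈ φ.range) :
    (∃ n : ℕ, ∀ x : G, x ∈ opL φ n) ↔ (∃ n : ℕ, opK φ n = ⊥) := by
  constructor
  · rintro ⟨n, hx⟩
    refine ⟨n, ?_⟩
    -- subgroup whose carrier is `opL φ m`
    let Lsub : ℕ → Subgroup G := fun m =>
      { carrier := opL φ m
        one_mem' := one_mem_opL φ m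
        mul_mem' := fun ha hb => (opL_closed φ hInn m).1 _ ha _ hb
        inv_mem' := fun ha => (opL_closed φ hInn m).2.1 _ ha }
    have main : ∀ m : ℕ, ∀ x ∈ opK φ m, x ∈ opL φ (n - m) := by
      intro m
      induction m with
      | zero => intro x _; simpa using hx x
      | succ m ih =>
        intro x hxm
        have hle : opK φ (m + 1) ≤ Lsub (n - (m + 1)) := by
          show Subgroup.closure _ ≤ _
          rw [Subgroup.closure_le]
          rintro y ⟨z, hz, r, rfl⟩
          have hzL := ih z hz
          show z⁻¹ * φ r z ∈ opL φ (n - (m + 1))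
          cases hnm : n - m with
          | zero =>
            rw [hnm, mem_opL_zero] at hzL
            subst hzL
            simpa using one_mem_opL φ (n - (m + 1))
          | succ j =>
            have hj : n - (m + 1) = j := by omega
            rw [hj]
            have := (mem_opL_succ φ j z).1 (hnm ▸ hzL) r
            simpa [opComm] using this
        exact hle hxm
    rw [Subgroup.eq_bot_iff_forall]
    intro x hxK
    have := main n x hxK
    rw [Nat.sub_self, mem_opL_zero] at this
    exact this
  · rintro ⟨n, hK⟩
    refine ⟨n, ?_⟩
    have main : ∀ (l : List R) (m : ℕ) (x : G), x ∈ opK φ m →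
        l.foldl (opComm φ) x ∈ opK φ (m + l.length) := by
      intro l
      induction l with
      | nil => intro m x hx; simpa using hx
      | cons r l ih =>
        intro m x hx
        have h1 : opComm φ x r ∈ opK φ (m + 1) :=
          Subgroup.subset_closure ⟨x, hx, r, rfl⟩
        have := ih (m + 1) _ h1
        rw [List.foldl_cons]
        have harith : m + 1 + l.length = m + (r :: l).length := by simp; omega
        rw [← harith]
        exact this
    intro x l hl
    have := main l 0 x (by simp [opK])
    rw [hl, zero_add, hK] at this
    simpa using this
end
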